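/- Consider the population risk φ(x) = f(x) + R(x) + ι_X(x) with f(x) = E_{ξ∼P}[f(x, ξ)] and the empirical risk φ_S(x) = f_S(x) + R(x) + ι_X(x) with f_S(x) = (1/m) Σ_{i=1}^m f(x, ξ_i), where R : ℝ^d → ℝ is real-valued, closed and convex and X is a nonempty, closed, convex set. Assume (Assumption A) f(x) < ∞ for all x in an open set O, and (Assumption B) for every x ∈ O there exist ε(x) > 0 and nonnegative λ(x, ξ) with E[λ(x, ξ)] < ∞ such that y ↦ f(y, ξ) + (λ(x,ξ)/2)‖y‖² is convex on B(x; ε(x)). Let G and G_S be selections of ∂f and ∂f_S on O, i.e. G(x) ∈ ∂f(x) and G_S(x) ∈ ∂f_S(x) for every x ∈ O. Then with probability one, sup_{x ∈ O ∩ X} H(∂φ(x), ∂φ_S(x)) ≤ sup_{x ∈ O} ‖G(x) − G_S(x)‖. -/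

import Mathlib

open MeasureTheory Metric Set Filter
open scoped InnerProductSpace ENNReal NNReal Topology

noncomputable section

variable {E : Type*} [NormedAddCommGroup E] [InnerProductSpace ℝ E]

/-- The Fréchet subdifferential of a real-valued function `f` at `x`. -/
def fsubdiff (f : E → ℝ) (x : E) : Set E :=
  {g | ∀ ε > 0, ∀ᶠ y in nhds x, f x + ⟪g, y - x⟫_ℝ - ε * ‖y - x‖ ≤ f y}

/-- The Fréchet subdifferential of an `(ℝ ∪ {+∞})`-valued function `f` at `x`. -/
def fsubdiffE (f : E → EReal) (x : E) : Set E :=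
  {g | ∀ ε > 0, ∀ᶠ y in nhds x, f x + ((⟪g, y - x⟫_ℝ - ε * ‖y - x‖ : ℝ) : EReal) ≤ f y}

open scoped Classical in
/-- The `+∞`-valued indicator `ι_X` of a set `X`. -/
def indicatorE {α : Type*} (X : Set α) (x : α) : EReal := if x ∈ X then 0 else ⊤

/-!
The bound holds for every sample and every `x ∈ O ∩ X`. On a ball `U ∋ x` inside `O`, both `f`
and `f_S` become convex after adding `(λ/2)‖·‖²` (with `λ = E[λ(x, ξ)]`, resp. its sample mean), so
their Fréchet subgradients are genuine subgradients on `U`, and by the Moreau–Rockafellar sum rule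
(Hahn–Banach separation of an epigraph from a hypograph) a subgradient of `φ` at `x` splits into one
of `f + (λ/2)‖·‖²` and one of `R + ι_X`. To move the first part from `f` to `f_S`, use monotonicity
of `∂f` at the points `x + t (y - x)`, where `G` and `G_S` are `r`-close: letting `t → 0` shows that
`a` is a subgradient of `f_S` up to the error `r ‖y - x‖`, and the sum rule applied to
`f_S + r ‖· - x‖` produces a true subgradient of `f_S` within `r` of `a`.
-/

lemma isOpen_strictEpigraph {V : Type*} [TopologicalSpace V] {U : Set V} {u : V → ℝ}
    (hU : IsOpen U) (hu : ContinuousOn u U) : IsOpen {p : V × ℝ | p.1 ∈ U ∧ u p.1 < p.2} :=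
  ((hu.comp continuousOn_fst fun _ hp => hp).prodMk continuousOn_snd).isOpen_inter_preimage
    (hU.preimage continuous_fst) (isOpen_lt continuous_fst continuous_snd)

/-- Sandwich theorem, by separating the strict epigraph of `u` from the hypograph of `w`. -/
theorem exists_strongDual_sandwich {V : Type*} [NormedAddCommGroup V] [NormedSpace ℝ V]
    {U T : Set V} {u w : V → ℝ} (hU : IsOpen U) (hu : ConvexOn ℝ U u) (hu_cont : ContinuousOn u U)
    (hw : ConcaveOn ℝ T w) (hwu : ∀ y ∈ U ∩ T, w y ≤ u y) {x : V} (hxU : x ∈ U) (hxT : x ∈ T)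
    (hx : u x = w x) :
    ∃ L : StrongDual ℝ V, (∀ y ∈ U, u x + L (y - x) ≤ u y) ∧ ∀ y ∈ T, w y ≤ w x + L (y - x) := by
  have hdisj : Disjoint {p : V × ℝ | p.1 ∈ U ∧ u p.1 < p.2} {p | p.1 ∈ T ∧ p.2 ≤ w p.1} :=
    Set.disjoint_left.2 fun p hA hC => (hA.2.trans_le hC.2).not_ge (hwu p.1 ⟨hA.1, hC.1⟩)
  obtain ⟨ℓ, c, hA, hC⟩ := geometric_hahn_banach_open hu.convex_strict_epigraph
    (isOpen_strictEpigraph hU hu_cont) hw.convex_hypograph hdisj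
  set L : StrongDual ℝ V := ℓ.comp (.inl ℝ V ℝ)
  set α := ℓ (0, 1)
  have hℓ : ∀ y t, ℓ (y, t) = L y + t * α := fun y t => by
    rw [show ((y, t) : V × ℝ) = (y, 0) + t • (0, 1) by simp, map_add, map_smul, smul_eq_mul]; rfl
  have hdown : ∀ y ∈ T, c ≤ L y + w y * α := fun y hy => by
    simpa [hℓ] using hC (y, w y) ⟨hy, le_rfl⟩
  have hα : α < 0 := by
    have := hA (x, u x + 1) ⟨hxU, by linarith⟩
    rw [hℓ] at this
    nlinarith [hdown x hxT]
  have hup : ∀ y ∈ U, L y + u y * α ≤ c := fun y hy => le_of_forall_pos_lt_add fun η hη => by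
    have := hA (y, u y + η / -α) ⟨hy, lt_add_of_pos_right _ (div_pos hη (neg_pos.2 hα))⟩
    rw [hℓ, add_mul, div_mul_eq_mul_div, div_neg, mul_div_cancel_right₀ _ hα.ne] at this
    linarith
  have hc : c = L x + u x * α := le_antisymm (hx ▸ hdown x hxT) (hup x hxU)
  refine ⟨(-α)⁻¹ • L, fun y hy => ?_, fun y hy => ?_⟩
  · rw [smul_apply, map_sub, smul_eq_mul, ← le_sub_iff_add_le', inv_mul_le_iff₀ (neg_pos.2 hα)]
    nlinarith [hup y hy]
  · rw [smul_apply, map_sub, smul_eq_mul, ← sub_le_iff_le_add', le_inv_mul_iff₀ (neg_pos.2 hα)]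
    nlinarith [hdown y hy]

def subgradientsOn (F : E → ℝ) (S : Set E) (x : E) : Set E :=
  {k | ∀ y ∈ S, F x + ⟪k, y - x⟫_ℝ ≤ F y}

def fsubdiffWithin (F : E → ℝ) (S : Set E) (x : E) : Set E :=
  {g | ∀ ε > 0, ∀ᶠ y in 𝓝 x, y ∈ S → F x + ⟪g, y - x⟫_ℝ - ε * ‖y - x‖ ≤ F y}

def addSqNorm {V : Type*} [SeminormedAddCommGroup V] (l : ℝ) (f : V → ℝ) (y : V) : ℝ :=
  f y + l / 2 * ‖y‖ ^ 2

lemma addSqNorm_add {V : Type*} [SeminormedAddCommGroup V] (l : ℝ) (f R : V → ℝ) :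
    addSqNorm l (fun y => f y + R y) = fun y => addSqNorm l f y + R y := by
  funext y; simp only [addSqNorm]; ring

lemma subgradientsOn_anti {F : E → ℝ} {S T : Set E} {x : E} (h : S ⊆ T) :
    subgradientsOn F T x ⊆ subgradientsOn F S x :=
  fun _ hk y hy => hk y (h hy)

lemma add_mem_subgradientsOn_add {F R : E → ℝ} {S : Set E} {x a b : E}
    (ha : a ∈ subgradientsOn F S x) (hb : b ∈ subgradientsOn R S x) :
    a + b ∈ subgradientsOn (fun y => F y + R y) S x := fun y hy => by
  have := ha y hy; have := hb y hy; rw [inner_add_left]; linarith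

lemma inner_sub_nonneg_of_mem_subgradientsOn {F : E → ℝ} {S : Set E} {x z a b : E} (hx : x ∈ S)
    (hz : z ∈ S) (ha : a ∈ subgradientsOn F S x) (hb : b ∈ subgradientsOn F S z) :
    0 ≤ ⟪b - a, z - x⟫_ℝ := by
  have h₁ := ha z hz; have h₂ := hb x hx
  rw [← neg_sub z x, inner_neg_right] at h₂
  rw [inner_sub_left]; linarith

lemma subgradientsOn_subset_fsubdiffWithin {F : E → ℝ} {S : Set E} {x : E} :
    subgradientsOn F S x ⊆ fsubdiffWithin F S x := fun _ hk ε hε =>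
  Eventually.of_forall fun y hy => by have := hk y hy; nlinarith [norm_nonneg (y - x)]

lemma fsubdiff_subset_fsubdiffWithin {F : E → ℝ} {S : Set E} {x : E} :
    fsubdiff F x ⊆ fsubdiffWithin F S x := fun _ hg ε hε =>
  (hg ε hε).mono fun _ hy _ => hy

lemma fsubdiffWithin_inter_of_mem_nhds {F : E → ℝ} {S U : Set E} {x : E} (hU : U ∈ 𝓝 x) :
    fsubdiffWithin F (U ∩ S) x = fsubdiffWithin F S x := by
  ext g
  refine ⟨fun hg ε hε => ?_, fun hg ε hε => (hg ε hε).mono fun _ hy hyUS => hy hyUS.2⟩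
  filter_upwards [hg ε hε, hU] with y hy hyU hyS using hy ⟨hyU, hyS⟩

lemma add_smul_mem_fsubdiffWithin_addSqNorm_iff {F : E → ℝ} {S : Set E} {x g : E} (l : ℝ) :
    g + l • x ∈ fsubdiffWithin (addSqNorm l F) S x ↔ g ∈ fsubdiffWithin F S x := by
  -- the two Fréchet inequalities differ by `l / 2 * ‖y - x‖ ^ 2 = o(‖y - x‖)`
  have hsq : ∀ y, addSqNorm l F y - addSqNorm l F x - ⟪g + l • x, y - x⟫_ℝ
      = F y - F x - ⟪g, y - x⟫_ℝ + l / 2 * ‖y - x‖ ^ 2 := fun y => by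
    have := norm_add_sq_real x (y - x)
    rw [add_sub_cancel] at this
    rw [addSqNorm, addSqNorm, inner_add_left, real_inner_smul_left, this]; ring
  have hsmall : ∀ ε > 0, ∀ᶠ y in 𝓝 x, |l / 2 * ‖y - x‖ ^ 2| ≤ ε * ‖y - x‖ := fun ε hε => by
    filter_upwards [ball_mem_nhds x (by positivity : 0 < 2 * ε / (|l| + 1))] with y hy
    rw [mem_ball_iff_norm, lt_div_iff₀ (by positivity)] at hy
    rw [abs_mul, abs_div, abs_two, abs_of_nonneg (by positivity : 0 ≤ ‖y - x‖ ^ 2)]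
    nlinarith [norm_nonneg (y - x), abs_nonneg l]
  constructor
  · intro hg ε hε
    filter_upwards [hg (ε / 2) (by positivity), hsmall (ε / 2) (by positivity)] with y hy hq hyS
    linarith [hy hyS, hsq y, le_abs_self (l / 2 * ‖y - x‖ ^ 2)]
  · intro hg ε hε
    filter_upwards [hg (ε / 2) (by positivity), hsmall (ε / 2) (by positivity)] with y hy hq hyS
    linarith [hy hyS, hsq y, neg_abs_le (l / 2 * ‖y - x‖ ^ 2)]

lemma mem_fsubdiffE_iff {f R : E → ℝ} {X : Set E} {x g : E} (hx : x ∈ X) :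
    g ∈ fsubdiffE (fun y => ((f y : ℝ) : EReal) + (R y : EReal) + indicatorE X y) x ↔
      g ∈ fsubdiffWithin (fun y => f y + R y) X x := by
  have hφ : ∀ y ∈ X,
      ((f y : ℝ) : EReal) + (R y : EReal) + indicatorE X y = ((f y + R y : ℝ) : EReal) := fun y hy => by rw [indicatorE, if_pos hy, add_zero, EReal.coe_add]
  refine forall₂_congr fun ε hε => ⟨fun hg => ?_, fun hg => ?_⟩
  · filter_upwards [hg] with y hy hyX
    rwa [hφ x hx, hφ y hyX, ← EReal.coe_add, EReal.coe_le_coe_iff, ← add_sub_assoc] at hy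
  · filter_upwards [hg] with y hy
    by_cases hyX : y ∈ X
    · rw [hφ x hx, hφ y hyX, ← EReal.coe_add, EReal.coe_le_coe_iff, ← add_sub_assoc]
      exact hy hyX
    · rw [show indicatorE X y = ⊤ from if_neg hyX, ← EReal.coe_add (f y), EReal.coe_add_top]
      exact le_top

lemma Filter.Eventually.add_smul_nhdsGT {V : Type*} [NormedAddCommGroup V] [NormedSpace ℝ V]
    {P : V → Prop} {x : V} (h : ∀ᶠ y in 𝓝 x, P y) (v : V) :
    ∀ᶠ t in 𝓝[>] (0 : ℝ), P (x + t • v) := by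
  have : Tendsto (fun t : ℝ => x + t • v) (𝓝 0) (𝓝 x) := by
    simpa using (Continuous.tendsto (by fun_prop : Continuous fun t : ℝ => x + t • v) 0)
  exact (this.mono_left nhdsWithin_le_nhds).eventually h

theorem ConvexOn.fsubdiffWithin_subset_subgradientsOn {F : E → ℝ} {S : Set E} {x : E}
    (hF : ConvexOn ℝ S F) (hx : x ∈ S) : fsubdiffWithin F S x ⊆ subgradientsOn F S x := by
  intro g hg z hz
  refine le_of_forall_pos_le_add fun δ hδ => ?_
  set ε := δ / (‖z - x‖ + 1)
  obtain ⟨t, hlocal, ht0, ht1⟩ :=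
    (((hg ε (by positivity)).add_smul_nhdsGT (z - x)).and (Ioo_mem_nhdsGT one_pos)).exists
  have hw : (1 - t) • x + t • z = x + t • (z - x) := by module
  have hconv := hF.2 hx hz (sub_nonneg.2 ht1.le) ht0.le (by ring)
  have hloc := hlocal (hw ▸ hF.1 hx hz (sub_nonneg.2 ht1.le) ht0.le (by ring))
  rw [hw, smul_eq_mul, smul_eq_mul] at hconv
  rw [add_sub_cancel_left, inner_smul_right, norm_smul, Real.norm_of_nonneg ht0.le] at hloc
  have hεδ : ε * ‖z - x‖ ≤ δ := by
    rw [div_mul_eq_mul_div, div_le_iff₀ (by positivity)]; nlinarith [norm_nonneg (z - x)]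
  have : t * (F x + ⟪g, z - x⟫_ℝ - ε * ‖z - x‖) ≤ t * F z := by linarith
  linarith [le_of_mul_le_mul_left this ht0]

lemma norm_le_of_mem_subgradientsOn_mul_norm_sub {U : Set E} {x w : E} {r : ℝ} (hr : 0 ≤ r)
    (hU : U ∈ 𝓝 x) (hw : w ∈ subgradientsOn (fun y => r * ‖y - x‖) U x) : ‖w‖ ≤ r := by
  obtain ⟨t, hmem, ht⟩ := ((Filter.Eventually.add_smul_nhdsGT hU w).and self_mem_nhdsWithin).exists
  have hineq : r * ‖x - x‖ + ⟪w, x + t • w - x⟫_ℝ ≤ r * ‖x + t • w - x‖ := hw _ hmem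
  rw [sub_self, norm_zero, mul_zero, zero_add, add_sub_cancel_left, real_inner_smul_right,
    real_inner_self_eq_norm_sq, norm_smul, Real.norm_of_nonneg ht.le] at hineq
  rcases (norm_nonneg w).eq_or_lt with hw0 | hw0
  · rw [← hw0]; exact hr
  · nlinarith [mul_pos ht hw0]

theorem ConvexOn.add_smul_mem_subgradientsOn {S : Set E} {f : E → ℝ} {l : ℝ} {x g : E}
    (hc : ConvexOn ℝ S (addSqNorm l f)) (hx : x ∈ S) (hg : g ∈ fsubdiff f x) :
    g + l • x ∈ subgradientsOn (addSqNorm l f) S x :=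
  hc.fsubdiffWithin_subset_subgradientsOn hx
    ((add_smul_mem_fsubdiffWithin_addSqNorm_iff l).2 (fsubdiff_subset_fsubdiffWithin hg))

section FiniteDimensional

open scoped Pointwise

variable [FiniteDimensional ℝ E]

/-- Moreau–Rockafellar sum rule. -/
theorem ConvexOn.subgradientsOn_add_subset {U T : Set E} {F R : E → ℝ} (hU : IsOpen U)
    (hF : ConvexOn ℝ U F) (hR : ConvexOn ℝ T R) {x : E} (hxU : x ∈ U) (hxT : x ∈ T) :
    subgradientsOn (fun y => F y + R y) T x ⊆ subgradientsOn F U x + subgradientsOn R T x := by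
  intro h hh
  have hu : ConvexOn ℝ U fun y => F y - ⟪h, y⟫_ℝ := hF.sub ((innerₛₗ ℝ h).concaveOn hF.1)
  have hw : ConcaveOn ℝ T fun y => -R y + (F x + R x - ⟪h, x⟫_ℝ) := hR.neg.add_const _
  obtain ⟨L, hLU, hLT⟩ := exists_strongDual_sandwich hU hu
    ((hF.continuousOn hU).sub (continuous_const.inner continuous_id).continuousOn) hw
    (fun y hy => by
      have : F x + R x + ⟪h, y - x⟫_ℝ ≤ F y + R y := hh y hy.2
      rw [inner_sub_right] at this
      linarith)
    hxU hxT (by ring)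
  set v := (InnerProductSpace.toDual ℝ E).symm L
  have hv : ∀ z, ⟪v, z⟫_ℝ = L z := fun z => InnerProductSpace.toDual_symm_apply
  refine ⟨h + v, fun y hy => ?_, -v, fun y hy => ?_, add_neg_cancel_right h v⟩
  · rw [inner_add_left, hv, inner_sub_right]; linarith [hLU y hy]
  · rw [inner_neg_left, hv]; linarith [hLT y hy]

theorem ConvexOn.exists_mem_subgradientsOn_norm_sub_le {U : Set E} {F : E → ℝ} (hU : IsOpen U)
    (hF : ConvexOn ℝ U F) {x a : E} {r : ℝ} (hr : 0 ≤ r) (hx : x ∈ U)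
    (ha : ∀ y ∈ U, F x + ⟪a, y - x⟫_ℝ ≤ F y + r * ‖y - x‖) :
    ∃ k ∈ subgradientsOn F U x, ‖a - k‖ ≤ r := by
  have hnorm : ConvexOn ℝ U fun y => r * ‖y - x‖ :=
    ((convexOn_dist x hF.1).smul hr).congr fun y _ => by simp only [dist_eq_norm, smul_eq_mul]
  obtain ⟨k, hk, b, hb, rfl⟩ := hF.subgradientsOn_add_subset hU hnorm hx hx
    (fun y hy => by simpa using ha y hy)
  exact ⟨k, hk, by simpa using norm_le_of_mem_subgradientsOn_mul_norm_sub hr (hU.mem_nhds hx) hb⟩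

theorem add_inner_le_add_mul_norm_of_fsubdiff_close {U : Set E} {f₁ f₂ : E → ℝ} {l₁ l₂ r : ℝ}
    (hU : IsOpen U) (hc₁ : ConvexOn ℝ U (addSqNorm l₁ f₁)) (hc₂ : ConvexOn ℝ U (addSqNorm l₂ f₂))
    (hsel : ∀ z ∈ U, ∃ g₁ ∈ fsubdiff f₁ z, ∃ g₂ ∈ fsubdiff f₂ z, ‖g₁ - g₂‖ ≤ r)
    {x a y : E} (hx : x ∈ U) (ha : a + l₁ • x ∈ subgradientsOn (addSqNorm l₁ f₁) U x)
    (hy : y ∈ U) :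
    addSqNorm l₂ f₂ x + ⟪a + l₂ • x, y - x⟫_ℝ ≤ addSqNorm l₂ f₂ y + r * ‖y - x‖ := by
  set d := y - x
  set z : ℝ → E := fun t => x + t • d
  set Φ : ℝ → ℝ := fun t =>
    addSqNorm l₂ f₂ (z t) + (1 - t) * (⟪a + l₁ • x + (l₂ - l₁) • z t, d⟫_ℝ - r * ‖d‖)
  -- monotonicity of `∂f₁` between `x` and `z t`, then `r`-closeness of `g₁, g₂`; finally `t → 0`
  have hstep : ∀ t ∈ Ioo (0 : ℝ) 1, Φ t ≤ addSqNorm l₂ f₂ y := by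
    rintro t ⟨ht0, ht1⟩
    have hzU : z t ∈ U := hc₂.1.add_smul_sub_mem hx hy ⟨ht0.le, ht1.le⟩
    obtain ⟨g₁, hg₁, g₂, hg₂, hg⟩ := hsel (z t) hzU
    have hmono := inner_sub_nonneg_of_mem_subgradientsOn hx hzU ha
      (hc₁.add_smul_mem_subgradientsOn hzU hg₁)
    rw [show z t - x = t • d by simp [z], real_inner_smul_right,
      mul_nonneg_iff_of_pos_left ht0] at hmono
    have hsub := hc₂.add_smul_mem_subgradientsOn hzU hg₂ y hy
    rw [show y - z t = (1 - t) • d by simp only [z, d]; module, real_inner_smul_right] at hsub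
    have hCS : ⟪g₁ - g₂, d⟫_ℝ ≤ r * ‖d‖ :=
      (real_inner_le_norm _ _).trans (mul_le_mul_of_nonneg_right hg (norm_nonneg d))
    have hslope : ⟪a + l₁ • x + (l₂ - l₁) • z t, d⟫_ℝ - r * ‖d‖ ≤ ⟪g₂ + l₂ • z t, d⟫_ℝ := by
      simp only [inner_add_left, inner_sub_left, real_inner_smul_left, sub_mul] at hmono hCS ⊢
      linarith
    simp only [Φ]
    linarith [mul_le_mul_of_nonneg_left hslope (sub_nonneg.2 ht1.le)]
  have hΦ : ContinuousAt Φ 0 := by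
    have hF : ContinuousAt (addSqNorm l₂ f₂) (z 0) := by
      simpa [z] using (hc₂.continuousOn hU).continuousAt (hU.mem_nhds hx)
    have hz : Continuous z := by fun_prop
    exact (hF.comp hz.continuousAt).add (by fun_prop)
  have h0 : Φ 0 = addSqNorm l₂ f₂ x + ⟪a + l₂ • x, d⟫_ℝ - r * ‖d‖ := by
    simp only [Φ, z, zero_smul, add_zero, sub_zero, one_mul]
    rw [show a + l₁ • x + (l₂ - l₁) • x = a + l₂ • x by module]; ring
  have := le_of_tendsto (hΦ.tendsto.mono_left nhdsWithin_le_nhds)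
    (eventually_of_mem (Ioo_mem_nhdsGT one_pos) hstep)
  linarith

theorem exists_mem_subgradientsOn_of_fsubdiff_close {U : Set E} {f₁ f₂ : E → ℝ} {l₁ l₂ r : ℝ}
    (hU : IsOpen U) (hc₁ : ConvexOn ℝ U (addSqNorm l₁ f₁)) (hc₂ : ConvexOn ℝ U (addSqNorm l₂ f₂))
    (hsel : ∀ z ∈ U, ∃ g₁ ∈ fsubdiff f₁ z, ∃ g₂ ∈ fsubdiff f₂ z, ‖g₁ - g₂‖ ≤ r)
    {x a : E} (hx : x ∈ U) (ha : a + l₁ • x ∈ subgradientsOn (addSqNorm l₁ f₁) U x) :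
    ∃ k, k + l₂ • x ∈ subgradientsOn (addSqNorm l₂ f₂) U x ∧ ‖a - k‖ ≤ r := by
  obtain ⟨g₁, -, g₂, -, hg⟩ := hsel x hx
  obtain ⟨k, hk, hak⟩ := hc₂.exists_mem_subgradientsOn_norm_sub_le hU ((norm_nonneg _).trans hg)
    hx fun y hy => add_inner_le_add_mul_norm_of_fsubdiff_close hU hc₁ hc₂ hsel hx ha hy
  exact ⟨k - l₂ • x, by rwa [sub_add_cancel], by rwa [sub_sub_eq_add_sub]⟩

theorem exists_mem_fsubdiffE_norm_sub_le {U X : Set E} {f₁ f₂ R : E → ℝ} {l₁ l₂ r : ℝ}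
    (hU : IsOpen U) (hc₁ : ConvexOn ℝ U (addSqNorm l₁ f₁)) (hc₂ : ConvexOn ℝ U (addSqNorm l₂ f₂))
    (hR : ConvexOn ℝ X R)
    (hsel : ∀ z ∈ U, ∃ g₁ ∈ fsubdiff f₁ z, ∃ g₂ ∈ fsubdiff f₂ z, ‖g₁ - g₂‖ ≤ r)
    {x g : E} (hxU : x ∈ U) (hxX : x ∈ X)
    (hg : g ∈ fsubdiffE (fun y => ((f₁ y : ℝ) : EReal) + (R y : EReal) + indicatorE X y) x) :
    ∃ k ∈ fsubdiffE (fun y => ((f₂ y : ℝ) : EReal) + (R y : EReal) + indicatorE X y) x,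
      ‖g - k‖ ≤ r := by
  have hUX : Convex ℝ (U ∩ X) := hc₁.1.inter hR.1
  have hRUX : ConvexOn ℝ (U ∩ X) R := hR.subset inter_subset_right hUX
  have hUx : U ∈ 𝓝 x := hU.mem_nhds hxU
  have h₁ : g + l₁ • x ∈ subgradientsOn (fun y => addSqNorm l₁ f₁ y + R y) (U ∩ X) x := by
    have hconv : ConvexOn ℝ (U ∩ X) (addSqNorm l₁ fun y => f₁ y + R y) := by
      rw [addSqNorm_add]; exact (hc₁.subset inter_subset_left hUX).add hRUX
    rw [← addSqNorm_add]
    refine hconv.fsubdiffWithin_subset_subgradientsOn ⟨hxU, hxX⟩ ?_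
    rwa [add_smul_mem_fsubdiffWithin_addSqNorm_iff, fsubdiffWithin_inter_of_mem_nhds hUx,
      ← mem_fsubdiffE_iff hxX]
  obtain ⟨a, ha, v, hv, hav⟩ := hc₁.subgradientsOn_add_subset hU hRUX hxU ⟨hxU, hxX⟩ h₁
  obtain ⟨k, hk, hgk⟩ := exists_mem_subgradientsOn_of_fsubdiff_close hU hc₁ hc₂ hsel hxU
    (a := g - v) (by rwa [sub_add_eq_add_sub, ← hav, add_sub_cancel_right])
  refine ⟨k + v, ?_, by rwa [sub_add_eq_sub_sub_swap]⟩
  rw [mem_fsubdiffE_iff hxX, ← fsubdiffWithin_inter_of_mem_nhds hUx,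
    ← add_smul_mem_fsubdiffWithin_addSqNorm_iff l₂, addSqNorm_add, add_right_comm]
  exact subgradientsOn_subset_fsubdiffWithin
    (add_mem_subgradientsOn_add (subgradientsOn_anti inter_subset_left hk) hv)

theorem hausdorffEDist_fsubdiffE_le {U X : Set E} {f₁ f₂ R : E → ℝ} {l₁ l₂ : ℝ} {r : ℝ≥0∞}
    (hU : IsOpen U) (hc₁ : ConvexOn ℝ U (addSqNorm l₁ f₁)) (hc₂ : ConvexOn ℝ U (addSqNorm l₂ f₂))
    (hR : ConvexOn ℝ X R)
    (hsel : ∀ z ∈ U, ∃ g₁ ∈ fsubdiff f₁ z, ∃ g₂ ∈ fsubdiff f₂ z, ENNReal.ofReal ‖g₁ - g₂‖ ≤ r)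
    {x : E} (hxU : x ∈ U) (hxX : x ∈ X) :
    hausdorffEDist
      (fsubdiffE (fun y => ((f₁ y : ℝ) : EReal) + (R y : EReal) + indicatorE X y) x)
      (fsubdiffE (fun y => ((f₂ y : ℝ) : EReal) + (R y : EReal) + indicatorE X y) x) ≤ r := by
  rcases eq_or_ne r ⊤ with rfl | hr
  · exact le_top
  have hsel' : ∀ z ∈ U, ∃ g₁ ∈ fsubdiff f₁ z, ∃ g₂ ∈ fsubdiff f₂ z, ‖g₁ - g₂‖ ≤ r.toReal :=
    fun z hz => by
      obtain ⟨g₁, hg₁, g₂, hg₂, hg⟩ := hsel z hz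
      exact ⟨g₁, hg₁, g₂, hg₂, (ENNReal.ofReal_le_iff_le_toReal hr).1 hg⟩
  have hsel'' : ∀ z ∈ U, ∃ g₂ ∈ fsubdiff f₂ z, ∃ g₁ ∈ fsubdiff f₁ z, ‖g₂ - g₁‖ ≤ r.toReal :=
    fun z hz => by
      obtain ⟨g₁, hg₁, g₂, hg₂, hg⟩ := hsel' z hz
      exact ⟨g₂, hg₂, g₁, hg₁, by rwa [norm_sub_rev]⟩
  have hclose : ∀ {A : Set E} {g : E}, (∃ k ∈ A, ‖g - k‖ ≤ r.toReal) → infEDist g A ≤ r :=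
    fun ⟨k, hk, hgk⟩ => (infEDist_le_edist_of_mem hk).trans <| by
      rwa [edist_dist, dist_eq_norm, ENNReal.ofReal_le_iff_le_toReal hr]
  exact hausdorffEDist_le_of_infEDist
    (fun g hg => hclose (exists_mem_fsubdiffE_norm_sub_le hU hc₁ hc₂ hR hsel' hxU hxX hg))
    (fun g hg => hclose (exists_mem_fsubdiffE_norm_sub_le hU hc₂ hc₁ hR hsel'' hxU hxX hg))

end FiniteDimensional

section

variable {V : Type*} [AddCommGroup V] [Module ℝ V]

lemma convexOn_integral {Ξ : Type*} [MeasurableSpace Ξ] {P : Measure Ξ} {s : Set V}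
    {F : V → Ξ → ℝ} (hs : Convex ℝ s) (hint : ∀ y ∈ s, Integrable (F y) P)
    (hF : ∀ ξ, ConvexOn ℝ s fun y => F y ξ) : ConvexOn ℝ s fun y => ∫ ξ, F y ξ ∂P := by
  refine ⟨hs, fun y hy z hz a b ha hb hab => ?_⟩
  calc ∫ ξ, F (a • y + b • z) ξ ∂P ≤ ∫ ξ, (a * F y ξ + b * F z ξ) ∂P :=
        integral_mono (hint _ (hs hy hz ha hb hab))
          (((hint y hy).const_mul a).add ((hint z hz).const_mul b))
          fun ξ => (hF ξ).2 hy hz ha hb hab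
    _ = a • ∫ ξ, F y ξ ∂P + b • ∫ ξ, F z ξ ∂P := by
        rw [integral_add ((hint y hy).const_mul a) ((hint z hz).const_mul b), integral_const_mul,
          integral_const_mul, smul_eq_mul, smul_eq_mul]

lemma convexOn_finset_sum {ι : Type*} (t : Finset ι) {s : Set V} (hs : Convex ℝ s)
    {F : ι → V → ℝ} (hF : ∀ i ∈ t, ConvexOn ℝ s (F i)) : ConvexOn ℝ s fun y => ∑ i ∈ t, F i y := by
  classical
  induction t using Finset.induction_on with
  | empty => simpa using convexOn_const (0 : ℝ) hs
  | insert a t hat ih =>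
    simp only [Finset.sum_insert hat]
    exact (hF a (t.mem_insert_self a)).add (ih fun i hi => hF i (Finset.mem_insert_of_mem hi))

end

lemma convexOn_addSqNorm_integral {Ξ : Type*} [MeasurableSpace Ξ] {P : Measure Ξ} {s : Set E}
    {f : E → Ξ → ℝ} {lam : Ξ → ℝ} (hs : Convex ℝ s) (hf : ∀ y ∈ s, Integrable (f y) P)
    (hlam : Integrable lam P) (hc : ∀ ξ, ConvexOn ℝ s (addSqNorm (lam ξ) fun y => f y ξ)) :
    ConvexOn ℝ s (addSqNorm (∫ ξ, lam ξ ∂P) fun y => ∫ ξ, f y ξ ∂P) := by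
  have hq : ∀ y : E, Integrable (fun ξ => lam ξ / 2 * ‖y‖ ^ 2) P :=
    fun y => (hlam.div_const 2).mul_const _
  refine (convexOn_integral hs (fun y hy => (hf y hy).add (hq y)) hc).congr fun y hy => ?_
  change ∫ ξ, (f y ξ + lam ξ / 2 * ‖y‖ ^ 2) ∂P = _
  rw [integral_add (hf y hy) (hq y), integral_mul_const, integral_div, addSqNorm]

lemma convexOn_addSqNorm_mul_sum {ι : Type*} [Fintype ι] {s : Set E} {f : ι → E → ℝ}
    {lam : ι → ℝ} {c : ℝ} (hc0 : 0 ≤ c) (hs : Convex ℝ s)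
    (hc : ∀ i, ConvexOn ℝ s (addSqNorm (lam i) (f i))) :
    ConvexOn ℝ s (addSqNorm (c * ∑ i, lam i) fun y => c * ∑ i, f i y) := by
  refine ((convexOn_finset_sum Finset.univ hs fun i _ => hc i).smul hc0).congr fun y _ => ?_
  simp only [addSqNorm, smul_eq_mul]
  rw [Finset.sum_add_distrib, ← Finset.sum_mul, ← Finset.sum_div]; ring

theorem statement5_general
    (d m : ℕ)
    (Ξ : Type*) [MeasurableSpace Ξ] (P : Measure Ξ)
    (f : EuclideanSpace ℝ (Fin d) → Ξ → ℝ)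
    (O : Set (EuclideanSpace ℝ (Fin d))) (hO : IsOpen O)
    (hA : ∀ x ∈ O, Integrable (f x) P)
    (hB : ∀ x ∈ O, ∃ ε > 0, ∃ lam : Ξ → ℝ, Measurable lam ∧ (∀ ξ, 0 ≤ lam ξ) ∧
      Integrable lam P ∧
      ∀ ξ, ConvexOn ℝ (ball x ε) (fun y => f y ξ + lam ξ / 2 * ‖y‖ ^ 2))
    (R : EuclideanSpace ℝ (Fin d) → ℝ) (hR : ConvexOn ℝ Set.univ R)
    (X : Set (EuclideanSpace ℝ (Fin d)))
    (hXcv : Convex ℝ X)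
    (G : EuclideanSpace ℝ (Fin d) → EuclideanSpace ℝ (Fin d))
    (hG : ∀ x ∈ O, G x ∈ fsubdiff (fun y => ∫ ξ, f y ξ ∂P) x)
    (GS : (Fin m → Ξ) → EuclideanSpace ℝ (Fin d) → EuclideanSpace ℝ (Fin d))
    (hGS : ∀ ω, ∀ x ∈ O, GS ω x ∈ fsubdiff (fun y => (m : ℝ)⁻¹ * ∑ i, f y (ω i)) x) :
    ∀ᵐ ω ∂(Measure.pi fun _ : Fin m => P),
      (⨆ x ∈ O ∩ X,
        EMetric.hausdorffEdist
          (fsubdiffE (fun y => ((∫ ξ, f y ξ ∂P : ℝ) : EReal) + (R y : EReal) + indicatorE X y) x)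
          (fsubdiffE (fun y =>
            (((m : ℝ)⁻¹ * ∑ i, f y (ω i) : ℝ) : EReal) + (R y : EReal) + indicatorE X y) x))
      ≤ ⨆ x ∈ O, ENNReal.ofReal ‖G x - GS ω x‖ := by
  refine ae_of_all _ fun ω => iSup₂_le fun x ⟨hxO, hxX⟩ => ?_
  obtain ⟨ε, hε, lam, -, -, hlam, hconv⟩ := hB x hxO
  obtain ⟨δ, hδ, hδO⟩ := Metric.isOpen_iff.mp hO x hxO
  have hUO : ball x (min ε δ) ⊆ O := (ball_subset_ball (min_le_right _ _)).trans hδO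
  have hconvU : ∀ ξ, ConvexOn ℝ (ball x (min ε δ)) (addSqNorm (lam ξ) fun y => f y ξ) :=
    fun ξ => (hconv ξ).subset (ball_subset_ball (min_le_left _ _)) (convex_ball _ _)
  exact hausdorffEDist_fsubdiffE_le isOpen_ball
    (convexOn_addSqNorm_integral (convex_ball _ _) (fun y hy => hA y (hUO hy)) hlam hconvU)
    (convexOn_addSqNorm_mul_sum (by positivity) (convex_ball _ _) fun i => hconvU (ω i))
    (hR.subset (subset_univ X) hXcv)
    (fun y hy => ⟨G y, hG y (hUO hy), GS ω y, hGS ω y (hUO hy),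
      le_iSup₂ (f := fun y _ => ENNReal.ofReal ‖G y - GS ω y‖) y (hUO hy)⟩)
    (mem_ball_self (lt_min hε hδ)) hxX

/-- For the population risk `φ = f + R + ι_X` and the empirical risk
`φ_S = f_S + R + ι_X`, under Assumptions A and B, for any selections `G, G_S` of `∂f, ∂f_S` on
the open set `O`, with probability one,
`sup_{x ∈ O ∩ X} H(∂φ(x), ∂φ_S(x)) ≤ sup_{x ∈ O} ‖G(x) - G_S(x)‖`. -/
theorem statement5
    (d m : ℕ) (hm : 0 < m)
    (Ξ : Type*) [MeasurableSpace Ξ] (P : Measure Ξ) [IsProbabilityMeasure P]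
    (f : EuclideanSpace ℝ (Fin d) → Ξ → ℝ) (hfmeas : ∀ x, Measurable (f x))
    (O : Set (EuclideanSpace ℝ (Fin d))) (hO : IsOpen O)
    (hA : ∀ x ∈ O, Integrable (f x) P)
    (hB : ∀ x ∈ O, ∃ ε > 0, ∃ lam : Ξ → ℝ, Measurable lam ∧ (∀ ξ, 0 ≤ lam ξ) ∧
      Integrable lam P ∧
      ∀ ξ, ConvexOn ℝ (ball x ε) (fun y => f y ξ + lam ξ / 2 * ‖y‖ ^ 2))
    (R : EuclideanSpace ℝ (Fin d) → ℝ) (hR : ConvexOn ℝ Set.univ R)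
    (X : Set (EuclideanSpace ℝ (Fin d))) (hXne : X.Nonempty) (hXcl : IsClosed X)
    (hXcv : Convex ℝ X)
    (G : EuclideanSpace ℝ (Fin d) → EuclideanSpace ℝ (Fin d))
    (hG : ∀ x ∈ O, G x ∈ fsubdiff (fun y => ∫ ξ, f y ξ ∂P) x)
    (GS : (Fin m → Ξ) → EuclideanSpace ℝ (Fin d) → EuclideanSpace ℝ (Fin d))
    (hGS : ∀ ω, ∀ x ∈ O, GS ω x ∈ fsubdiff (fun y => (m : ℝ)⁻¹ * ∑ i, f y (ω i)) x) :
    ∀ᵐ ω ∂(Measure.pi fun _ : Fin m => P),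
      (⨆ x ∈ O ∩ X,
        EMetric.hausdorffEdist
          (fsubdiffE (fun y => ((∫ ξ, f y ξ ∂P : ℝ) : EReal) + (R y : EReal) + indicatorE X y) x)
          (fsubdiffE (fun y =>
            (((m : ℝ)⁻¹ * ∑ i, f y (ω i) : ℝ) : EReal) + (R y : EReal) + indicatorE X y) x))
      ≤ ⨆ x ∈ O, ENNReal.ofReal ‖G x - GS ω x‖ :=
  statement5_general d m Ξ P f O hO hA hB R hR X hXcv G hG GS hGS
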